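/- arXiv:2402.19176 — 7 statements merged into one kernel-verified Lean document; each statement's English description precedes it below -/
import Mathlib

section
/- For every α ∈ (0,2] and every step size τ ∈ (0, 1/λ_max], the dogleg path point is a non-ascent direction for the quadratic model evaluated at that point: ⟨p(α), Q p(α) + g⟩ ≤ 0. -/
open scoped RealInnerProductSpace

/-!
Both branches of the path have the form `p = -((1 - s) τ g + s y)` with `y = Q⁻¹ g` and
`s ∈ [0, 1]`, and then `Q p + g = (1 - s) r` with `r = g - τ Q g`. So `⟪p, Q p + g⟫` is
`-(1 - s)` times a nonnegative combination of `⟪g, r⟫ = ‖g‖² - τ ⟪Q g, g⟫` and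
`⟪y, r⟫ = ⟪Q y, y⟫ - τ ‖Q y‖²`, both of which are nonnegative once `τ λ_max ≤ 1`.
-/

/-- The dogleg path: `p(α) = -τ g` for `α ∈ (0,1]`, and
`p(α) = -τ g + (α-1)(-Q⁻¹ g + τ g)` for `α ∈ (1,2]`. -/
noncomputable def doglegPath {n : ℕ} (τ : ℝ) (g : EuclideanSpace ℝ (Fin n))
    (Qinv : EuclideanSpace ℝ (Fin n) →ₗ[ℝ] EuclideanSpace ℝ (Fin n)) (α : ℝ) :
    EuclideanSpace ℝ (Fin n) :=
  if α ≤ 1 then (-τ) • g else (-τ) • g + (α - 1) • (-(Qinv g) + τ • g)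

namespace LinearMap

variable {E : Type*} [NormedAddCommGroup E] [InnerProductSpace ℝ E]
  {Q : E →ₗ[ℝ] E} {L τ : ℝ}

/-- Expand `0 ≤ ⟪Q u, u⟫` at `u = x - τ Q x` and bound the `τ²` term by `L ‖Q x‖²`. -/
theorem IsPositive.smul_norm_apply_sq_le (hQ : Q.IsPositive)
    (hQL : ∀ x, ⟪Q x, x⟫ ≤ L * ‖x‖ ^ 2) (hτ : 0 ≤ τ) (hτL : τ * L ≤ 1) (x : E) :
    τ * ‖Q x‖ ^ 2 ≤ ⟪Q x, x⟫ := by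
  have hexpand : ⟪Q (x - τ • Q x), x - τ • Q x⟫
      = ⟪Q x, x⟫ - 2 * τ * ‖Q x‖ ^ 2 + τ ^ 2 * ⟪Q (Q x), Q x⟫ := by
    rw [map_sub, map_smul, inner_sub_left, inner_sub_right, inner_sub_right,
      real_inner_smul_left, real_inner_smul_right, real_inner_smul_left,
      real_inner_smul_right, hQ.isSymmetric (Q x) x, real_inner_self_eq_norm_sq]
    ring
  have hquad : τ ^ 2 * ⟪Q (Q x), Q x⟫ ≤ τ * ‖Q x‖ ^ 2 :=
    calc τ ^ 2 * ⟪Q (Q x), Q x⟫ ≤ τ ^ 2 * (L * ‖Q x‖ ^ 2) := by gcongr; exact hQL (Q x)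
      _ = τ * L * (τ * ‖Q x‖ ^ 2) := by ring
      _ ≤ τ * ‖Q x‖ ^ 2 := mul_le_of_le_one_left (by positivity) hτL
  linarith [hQ.inner_nonneg_left (x - τ • Q x)]

end LinearMap

variable {E : Type*} [NormedAddCommGroup E] [InnerProductSpace ℝ E]

theorem inner_dogleg_segment_nonpos {Q : E →ₗ[ℝ] E} (hQ : Q.IsPositive) {L τ s : ℝ}
    (hQL : ∀ x, ⟪Q x, x⟫ ≤ L * ‖x‖ ^ 2) (hτ : 0 ≤ τ) (hτL : τ * L ≤ 1)
    (hs₀ : 0 ≤ s) (hs₁ : s ≤ 1) {g y : E} (hy : Q y = g) :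
    ⟪(-τ) • g + s • (-y + τ • g), Q ((-τ) • g + s • (-y + τ • g)) + g⟫ ≤ 0 := by
  have hgrad : Q ((-τ) • g + s • (-y + τ • g)) + g = (1 - s) • (g - τ • Q g) := by
    simp only [map_add, map_smul, map_neg, hy]
    module
  have hpoint : (-τ) • g + s • (-y + τ • g) = -(((1 - s) * τ) • g + s • y) := by
    module
  have hg : 0 ≤ ⟪g, g - τ • Q g⟫ := by
    have := mul_le_mul_of_nonneg_left (hQL g) hτ
    rw [inner_sub_right, real_inner_smul_right, real_inner_self_eq_norm_sq,
      real_inner_comm]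
    nlinarith [sq_nonneg ‖g‖]
  have hyr : 0 ≤ ⟪y, g - τ • Q g⟫ := by
    have := hQ.smul_norm_apply_sq_le hQL hτ hτL y
    subst hy
    rw [inner_sub_right, real_inner_smul_right, ← hQ.isSymmetric y (Q y),
      real_inner_self_eq_norm_sq, real_inner_comm]
    linarith
  rw [hgrad, hpoint, inner_neg_left, real_inner_smul_right, inner_add_left,
    real_inner_smul_left, real_inner_smul_left]
  have h1s : 0 ≤ 1 - s := by linarith
  have : 0 ≤ (1 - s) * ((1 - s) * τ * ⟪g, g - τ • Q g⟫ + s * ⟪y, g - τ • Q g⟫) := by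
    positivity
  linarith

theorem dogleg_nonascent_general {n : ℕ}
    (Q Qinv : EuclideanSpace ℝ (Fin n) →ₗ[ℝ] EuclideanSpace ℝ (Fin n))
    (hQsymm : ∀ x y : EuclideanSpace ℝ (Fin n), ⟪Q x, y⟫ = ⟪x, Q y⟫)
    (hQpd : ∀ x : EuclideanSpace ℝ (Fin n), x ≠ 0 → 0 < ⟪Q x, x⟫)
    (hinv₁ : ∀ x, Q (Qinv x) = x)
    (lamMax : ℝ) (hlamMaxPos : 0 < lamMax)
    (hRayleighMax : ∀ x : EuclideanSpace ℝ (Fin n), ⟪Q x, x⟫ ≤ lamMax * ‖x‖ ^ 2)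
    (g : EuclideanSpace ℝ (Fin n)) (τ : ℝ)
    (hτpos : 0 < τ) (hτle : τ ≤ 1 / lamMax)
    (α : ℝ) (hα₂ : α ≤ 2) :
    ⟪doglegPath τ g Qinv α, Q (doglegPath τ g Qinv α) + g⟫ ≤ 0 := by
  have hQ : Q.IsPositive := by
    refine (Q.isPositive_iff).mpr ⟨hQsymm, fun x => ?_⟩
    rcases eq_or_ne x 0 with rfl | hx
    · simp
    · exact (hQpd x hx).le
  have hτL : τ * lamMax ≤ 1 := (le_div_iff₀ hlamMaxPos).mp hτle
  unfold doglegPath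
  split_ifs with hα₁
  · simpa using inner_dogleg_segment_nonpos hQ hRayleighMax hτpos.le hτL le_rfl zero_le_one
      (hinv₁ g)
  · exact inner_dogleg_segment_nonpos hQ hRayleighMax hτpos.le hτL (by linarith) (by linarith)
      (hinv₁ g)

/-- For every `α ∈ (0,2]` and every step size `τ ∈ (0, 1/λ_max]`, the dogleg path
point is a non-ascent direction for the quadratic model evaluated at that point:
`⟨p(α), Q p(α) + g⟩ ≤ 0`. -/
theorem dogleg_nonascent {n : ℕ}
    (Q Qinv : EuclideanSpace ℝ (Fin n) →ₗ[ℝ] EuclideanSpace ℝ (Fin n))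
    (hQsymm : ∀ x y : EuclideanSpace ℝ (Fin n), ⟪Q x, y⟫ = ⟪x, Q y⟫)
    (hQpd : ∀ x : EuclideanSpace ℝ (Fin n), x ≠ 0 → 0 < ⟪Q x, x⟫)
    (hinv₁ : ∀ x, Q (Qinv x) = x) (hinv₂ : ∀ x, Qinv (Q x) = x)
    (lamMax lamMin : ℝ) (hlamMaxPos : 0 < lamMax) (hlamMinPos : 0 < lamMin)
    (hRayleighMax : ∀ x : EuclideanSpace ℝ (Fin n), ⟪Q x, x⟫ ≤ lamMax * ‖x‖ ^ 2)
    (hRayleighMin : ∀ x : EuclideanSpace ℝ (Fin n), lamMin * ‖x‖ ^ 2 ≤ ⟪Q x, x⟫)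
    (g : EuclideanSpace ℝ (Fin n)) (τ : ℝ)
    (hτpos : 0 < τ) (hτle : τ ≤ 1 / lamMax)
    (α : ℝ) (hα₀ : 0 < α) (hα₂ : α ≤ 2) :
    ⟪doglegPath τ g Qinv α, Q (doglegPath τ g Qinv α) + g⟫ ≤ 0 :=
  dogleg_nonascent_general Q Qinv hQsymm hQpd hinv₁ lamMax hlamMaxPos hRayleighMax g τ hτpos hτle α
    hα₂
end

section
/- If g ≠ 0 and τ ∈ (0, 1/λ_max], then for every α ∈ (0,2] one has ⟨g, p(α)⟩ < 0; consequently p(α) ≠ 0 and the dogleg step size τ_α = −‖p(α)‖² / ⟨g, p(α)⟩ is strictly positive. -/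
open scoped RealInnerProductSpace

/-- The dogleg step size `τ_α = -‖p(α)‖² / ⟨g, p(α)⟩`. -/
noncomputable def doglegTau {n : ℕ} (τ : ℝ) (g : EuclideanSpace ℝ (Fin n))
    (Qinv : EuclideanSpace ℝ (Fin n) →ₗ[ℝ] EuclideanSpace ℝ (Fin n)) (α : ℝ) : ℝ :=
  -‖doglegPath τ g Qinv α‖ ^ 2 / ⟪g, doglegPath τ g Qinv α⟫

/-- `g_α = (⟨g, p(α)⟩ / ‖p(α)‖²) p(α)`. -/
noncomputable def doglegG {n : ℕ} (τ : ℝ) (g : EuclideanSpace ℝ (Fin n))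
    (Qinv : EuclideanSpace ℝ (Fin n) →ₗ[ℝ] EuclideanSpace ℝ (Fin n)) (α : ℝ) :
    EuclideanSpace ℝ (Fin n) :=
  (⟪g, doglegPath τ g Qinv α⟫ / ‖doglegPath τ g Qinv α‖ ^ 2) • doglegPath τ g Qinv α

/-- The (shifted) quadratic model `q(x) = ⟨g, x⟩ + (1/2) xᵀ Q x`. -/
noncomputable def quadModel {n : ℕ}
    (Q : EuclideanSpace ℝ (Fin n) →ₗ[ℝ] EuclideanSpace ℝ (Fin n))
    (g x : EuclideanSpace ℝ (Fin n)) : ℝ :=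
  ⟪g, x⟫ + (1 / 2) * ⟪Q x, x⟫

/-- The surrogate `m_α(x) = ⟨g_α, x⟩ + (1/(2 τ_α)) ‖x‖²`. -/
noncomputable def doglegSurrogate {n : ℕ} (τ : ℝ) (g : EuclideanSpace ℝ (Fin n))
    (Qinv : EuclideanSpace ℝ (Fin n) →ₗ[ℝ] EuclideanSpace ℝ (Fin n)) (α : ℝ)
    (x : EuclideanSpace ℝ (Fin n)) : ℝ :=
  ⟪doglegG τ g Qinv α, x⟫ + (1 / (2 * doglegTau τ g Qinv α)) * ‖x‖ ^ 2

/-! Writing `y = Q⁻¹ g`, positivity of `Q` along `y - τ g` gives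
`⟨g, y⟩ ≥ 2τ‖g‖² - τ²⟨Q g, g⟩ ≥ τ‖g‖²` once `τ λ_max ≤ 1`. Hence the second leg
`-Q⁻¹ g + τ g` of the dogleg is not an ascent direction, and
`⟨g, p(α)⟩ ≤ -τ‖g‖² < 0` along the whole path. -/

section QuadraticForm

variable {E : Type*} [NormedAddCommGroup E] [InnerProductSpace ℝ E]

theorem two_mul_sub_sq_mul_le_inner_of_apply_eq (Q : E →ₗ[ℝ] E)
    (hQsymm : ∀ x y : E, ⟪Q x, y⟫ = ⟪x, Q y⟫) (hQnonneg : ∀ x : E, 0 ≤ ⟪Q x, x⟫)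
    {g y : E} (hy : Q y = g) (s : ℝ) :
    2 * s * ‖g‖ ^ 2 - s ^ 2 * ⟪Q g, g⟫ ≤ ⟪g, y⟫ := by
  have hexpand :
      ⟪Q (y - s • g), y - s • g⟫ = ⟪g, y⟫ - 2 * s * ‖g‖ ^ 2 + s ^ 2 * ⟪Q g, g⟫ := by
    simp only [map_sub, map_smul, inner_sub_left, inner_sub_right, real_inner_smul_left,
      real_inner_smul_right, hy, hQsymm g y, real_inner_self_eq_norm_sq]
    ring
  linarith [hQnonneg (y - s • g)]

theorem mul_norm_sq_le_inner_of_apply_eq (Q : E →ₗ[ℝ] E)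
    (hQsymm : ∀ x y : E, ⟪Q x, y⟫ = ⟪x, Q y⟫) (hQnonneg : ∀ x : E, 0 ≤ ⟪Q x, x⟫)
    {g y : E} (hy : Q y = g) {lam : ℝ} (hlam : 0 < lam)
    (hRayleigh : ⟪Q g, g⟫ ≤ lam * ‖g‖ ^ 2)
    {τ : ℝ} (hτ₀ : 0 ≤ τ) (hτ : τ ≤ 1 / lam) :
    τ * ‖g‖ ^ 2 ≤ ⟪g, y⟫ := by
  have hτlam : τ * lam ≤ 1 := (le_div_iff₀ hlam).mp hτ
  have hquad : τ ^ 2 * ⟪Q g, g⟫ ≤ τ * ‖g‖ ^ 2 :=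
    calc τ ^ 2 * ⟪Q g, g⟫ ≤ τ ^ 2 * (lam * ‖g‖ ^ 2) := by gcongr
      _ = (τ * lam) * (τ * ‖g‖ ^ 2) := by ring
      _ ≤ 1 * (τ * ‖g‖ ^ 2) := by gcongr
      _ = τ * ‖g‖ ^ 2 := one_mul _
  linarith [two_mul_sub_sq_mul_le_inner_of_apply_eq Q hQsymm hQnonneg hy τ]

end QuadraticForm

theorem inner_doglegPath_le {n : ℕ} (τ : ℝ) (g : EuclideanSpace ℝ (Fin n))
    (Qinv : EuclideanSpace ℝ (Fin n) →ₗ[ℝ] EuclideanSpace ℝ (Fin n)) (α : ℝ)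
    (hdescent : τ * ‖g‖ ^ 2 ≤ ⟪g, Qinv g⟫) :
    ⟪g, doglegPath τ g Qinv α⟫ ≤ -τ * ‖g‖ ^ 2 := by
  unfold doglegPath
  split_ifs with hα
  · simp only [real_inner_smul_right, real_inner_self_eq_norm_sq, le_refl]
  · have hsecond : ⟪g, -Qinv g + τ • g⟫ ≤ 0 := by
      simp only [inner_add_right, inner_neg_right, real_inner_smul_right,
        real_inner_self_eq_norm_sq]
      linarith
    rw [inner_add_right, real_inner_smul_right, real_inner_smul_right (r := α - 1),
      real_inner_self_eq_norm_sq]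
    linarith [mul_nonpos_of_nonneg_of_nonpos (sub_nonneg.mpr (not_le.mp hα).le) hsecond]

theorem dogleg_negative_inner_and_positive_tau_general {n : ℕ}
    (Q Qinv : EuclideanSpace ℝ (Fin n) →ₗ[ℝ] EuclideanSpace ℝ (Fin n))
    (hQsymm : ∀ x y : EuclideanSpace ℝ (Fin n), ⟪Q x, y⟫ = ⟪x, Q y⟫)
    (hQpd : ∀ x : EuclideanSpace ℝ (Fin n), x ≠ 0 → 0 < ⟪Q x, x⟫)
    (hinv₁ : ∀ x, Q (Qinv x) = x)
    (lamMax : ℝ) (hlamMaxPos : 0 < lamMax)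
    (hRayleighMax : ∀ x : EuclideanSpace ℝ (Fin n), ⟪Q x, x⟫ ≤ lamMax * ‖x‖ ^ 2)
    (g : EuclideanSpace ℝ (Fin n)) (hg : g ≠ 0) (τ : ℝ)
    (hτpos : 0 < τ) (hτle : τ ≤ 1 / lamMax)
    (α : ℝ) :
    ⟪g, doglegPath τ g Qinv α⟫ < 0 ∧ doglegPath τ g Qinv α ≠ 0 ∧
      0 < doglegTau τ g Qinv α := by
  have hQnonneg : ∀ x, 0 ≤ ⟪Q x, x⟫ := fun x => by
    rcases eq_or_ne x 0 with rfl | hx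
    · simp
    · exact (hQpd x hx).le
  have hdescent : τ * ‖g‖ ^ 2 ≤ ⟪g, Qinv g⟫ :=
    mul_norm_sq_le_inner_of_apply_eq Q hQsymm hQnonneg (hinv₁ g) hlamMaxPos
      (hRayleighMax g) hτpos.le hτle
  have hinner : ⟪g, doglegPath τ g Qinv α⟫ < 0 := by
    have := inner_doglegPath_le τ g Qinv α hdescent
    have : 0 < τ * ‖g‖ ^ 2 := by positivity
    linarith
  have hpath : doglegPath τ g Qinv α ≠ 0 := fun h => by simp [h] at hinner
  exact ⟨hinner, hpath, div_pos_of_neg_of_neg (neg_neg_of_pos (by positivity)) hinner⟩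

/-- If `g ≠ 0` and `τ ∈ (0, 1/λ_max]`, then for every `α ∈ (0,2]` one has
`⟨g, p(α)⟩ < 0`; consequently `p(α) ≠ 0` and the dogleg step size
`τ_α = -‖p(α)‖² / ⟨g, p(α)⟩` is strictly positive. -/
theorem dogleg_negative_inner_and_positive_tau {n : ℕ}
    (Q Qinv : EuclideanSpace ℝ (Fin n) →ₗ[ℝ] EuclideanSpace ℝ (Fin n))
    (hQsymm : ∀ x y : EuclideanSpace ℝ (Fin n), ⟪Q x, y⟫ = ⟪x, Q y⟫)
    (hQpd : ∀ x : EuclideanSpace ℝ (Fin n), x ≠ 0 → 0 < ⟪Q x, x⟫)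
    (hinv₁ : ∀ x, Q (Qinv x) = x) (hinv₂ : ∀ x, Qinv (Q x) = x)
    (lamMax lamMin : ℝ) (hlamMaxPos : 0 < lamMax) (hlamMinPos : 0 < lamMin)
    (hRayleighMax : ∀ x : EuclideanSpace ℝ (Fin n), ⟪Q x, x⟫ ≤ lamMax * ‖x‖ ^ 2)
    (hRayleighMin : ∀ x : EuclideanSpace ℝ (Fin n), lamMin * ‖x‖ ^ 2 ≤ ⟪Q x, x⟫)
    (g : EuclideanSpace ℝ (Fin n)) (hg : g ≠ 0) (τ : ℝ)
    (hτpos : 0 < τ) (hτle : τ ≤ 1 / lamMax)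
    (α : ℝ) (hα₀ : 0 < α) (hα₂ : α ≤ 2) :
    ⟪g, doglegPath τ g Qinv α⟫ < 0 ∧ doglegPath τ g Qinv α ≠ 0 ∧
      0 < doglegTau τ g Qinv α :=
  dogleg_negative_inner_and_positive_tau_general Q Qinv hQsymm hQpd hinv₁ lamMax hlamMaxPos
    hRayleighMax g hg τ hτpos hτle α
end

section
/- Fix α ∈ (1,2], assume g ≠ 0 and τ ∈ (0, 1/λ_max], and define the restrictions q̄(β) = q(β p(α)) and m̄_α(β) = m_α(β p(α)) for β ∈ ℝ. Then β = 1 is the unique minimizer of m̄_α over ℝ, q̄ is a strictly convex univariate quadratic, and its unique minimizer β_q = −⟨g, p(α)⟩ / (p(α)ᵀ Q p(α)) satisfies β_q ≥ 1. -/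
set_option maxHeartbeats 1000000


open scoped RealInnerProductSpace

/-! For `α ∈ (1, 2]` and `s = α - 1`, the direction `d = -p(α) = c + s (u - c)` lies on the
segment from the Cauchy step `c = τ g` to the Newton step `u = Q⁻¹ g`. The Cauchy step satisfies
`⟨Q c, c⟩ ≤ ⟨g, c⟩` as soon as `τ λ_max ≤ 1`. Along the segment `⟨g, ·⟩` only grows, since
`⟨g, u - c⟩ = ⟨Q (u - c), u - c⟩ + ⟨g, c⟩ - ⟨Q c, c⟩ ≥ 0`; and the residual
`Q d - g = (1 - s)(Q c - g)` pairs with `d` to give `⟨Q d, d⟩ ≤ ⟨g, d⟩`.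
Hence `⟨g, p⟩ < 0` and `pᵀ Q p ≤ -⟨g, p⟩`: both restrictions are univariate quadratics with
positive leading coefficient, with vertices `1` and `β_q = -⟨g, p⟩ / pᵀ Q p ≥ 1`. -/

theorem quadratic_lt_quadratic_of_ne_vertex {a b v β : ℝ} (ha : 0 < a) (hv : 2 * a * v + b = 0)
    (hβ : β ≠ v) : a * v ^ 2 + b * v < a * β ^ 2 + b * β := by
  have hsq : 0 < (β - v) ^ 2 := sq_pos_of_ne_zero (sub_ne_zero.mpr hβ)
  have hdiff : a * β ^ 2 + b * β - (a * v ^ 2 + b * v) = a * (β - v) ^ 2 := by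
    linear_combination (β - v) * hv
  nlinarith [mul_pos ha hsq]

section Segment

variable {E : Type*} [NormedAddCommGroup E] [InnerProductSpace ℝ E] {Q : E →ₗ[ℝ] E} {g c u : E}
  {s : ℝ}

theorem inner_le_inner_add_smul_sub (hQsymm : ∀ x y, ⟪Q x, y⟫ = ⟪x, Q y⟫)
    (hQpsd : ∀ x, 0 ≤ ⟪Q x, x⟫) (hu : Q u = g) (hc : ⟪Q c, c⟫ ≤ ⟪g, c⟫) (hs : 0 ≤ s) :
    ⟪g, c⟫ ≤ ⟪g, c + s • (u - c)⟫ := by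
  have hgw : ⟪g, u - c⟫ = ⟪Q (u - c), u - c⟫ + (⟪g, c⟫ - ⟪Q c, c⟫) := by
    have hcu : ⟪Q c, u⟫ = ⟪g, c⟫ := by rw [hQsymm, hu, real_inner_comm]
    rw [map_sub, hu, inner_sub_left, inner_sub_right (Q c), hcu]
    ring
  rw [inner_add_right, real_inner_smul_right]
  nlinarith [hQpsd (u - c)]

theorem inner_map_add_smul_sub_le (hQpsd : ∀ x, 0 ≤ ⟪Q x, x⟫) (hu : Q u = g)
    (hc : ⟪Q c, c⟫ ≤ ⟪g, c⟫) (hs₀ : 0 ≤ s) (hs₁ : s ≤ 1) :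
    ⟪Q (c + s • (u - c)), c + s • (u - c)⟫ ≤ ⟪g, c + s • (u - c)⟫ := by
  have hres : Q (c + s • (u - c)) - g = (1 - s) • (Q c - g) := by
    rw [map_add, map_smul, map_sub, hu]
    module
  have hcross : ⟪Q c - g, u - c⟫ = -⟪Q (u - c), u - c⟫ := by
    rw [map_sub, hu, ← inner_neg_left, neg_sub]
  have hgap : ⟪Q (c + s • (u - c)), c + s • (u - c)⟫ - ⟪g, c + s • (u - c)⟫
      = (1 - s) * ((⟪Q c, c⟫ - ⟪g, c⟫) - s * ⟪Q (u - c), u - c⟫) := by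
    rw [← inner_sub_left, hres, real_inner_smul_left, inner_add_right, real_inner_smul_right,
      hcross, inner_sub_left]
    ring
  nlinarith [mul_nonneg hs₀ (hQpsd (u - c)), mul_nonneg (sub_nonneg.mpr hs₁)
    (mul_nonneg hs₀ (hQpsd (u - c)))]

end Segment

section Dogleg

variable {n : ℕ} {Q Qinv : EuclideanSpace ℝ (Fin n) →ₗ[ℝ] EuclideanSpace ℝ (Fin n)}
  {g : EuclideanSpace ℝ (Fin n)} {τ α : ℝ}

theorem doglegPath_of_one_lt (hα : 1 < α) :
    doglegPath τ g Qinv α = -(τ • g + (α - 1) • (Qinv g - τ • g)) := by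
  rw [doglegPath, if_neg hα.not_ge]
  module

theorem inner_map_smul_self_le_inner {lamMax : ℝ} (hRayleighMax : ⟪Q g, g⟫ ≤ lamMax * ‖g‖ ^ 2)
    (hτpos : 0 ≤ τ) (hτlam : τ * lamMax ≤ 1) : ⟪Q (τ • g), τ • g⟫ ≤ ⟪g, τ • g⟫ := by
  rw [map_smul, real_inner_smul_left, real_inner_smul_right, real_inner_smul_right,
    real_inner_self_eq_norm_sq]
  nlinarith [mul_le_mul_of_nonneg_left hRayleighMax (mul_nonneg hτpos hτpos),
    mul_le_mul_of_nonneg_right hτlam (mul_nonneg hτpos (sq_nonneg ‖g‖))]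

theorem quadModel_smul (x : EuclideanSpace ℝ (Fin n)) (β : ℝ) :
    quadModel Q g (β • x) = ⟪Q x, x⟫ / 2 * β ^ 2 + ⟪g, x⟫ * β := by
  rw [quadModel, map_smul, real_inner_smul_left, real_inner_smul_right, real_inner_smul_right]
  ring

theorem doglegSurrogate_smul_doglegPath (hgp : ⟪g, doglegPath τ g Qinv α⟫ ≠ 0) (β : ℝ) :
    doglegSurrogate τ g Qinv α (β • doglegPath τ g Qinv α)
      = -⟪g, doglegPath τ g Qinv α⟫ / 2 * β ^ 2 + ⟪g, doglegPath τ g Qinv α⟫ * β := by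
  have hp : ‖doglegPath τ g Qinv α‖ ≠ 0 := by
    rintro hp
    rw [norm_eq_zero.mp hp, inner_zero_right] at hgp
    exact hgp rfl
  rw [doglegSurrogate, doglegG, doglegTau, norm_smul, mul_pow, Real.norm_eq_abs, sq_abs,
    real_inner_smul_left, real_inner_smul_right, real_inner_self_eq_norm_sq]
  field_simp
  ring

end Dogleg

theorem dogleg_restriction_minimizers_general {n : ℕ}
    (Q Qinv : EuclideanSpace ℝ (Fin n) →ₗ[ℝ] EuclideanSpace ℝ (Fin n))
    (hQsymm : ∀ x y : EuclideanSpace ℝ (Fin n), ⟪Q x, y⟫ = ⟪x, Q y⟫)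
    (hQpd : ∀ x : EuclideanSpace ℝ (Fin n), x ≠ 0 → 0 < ⟪Q x, x⟫)
    (hinv₁ : ∀ x, Q (Qinv x) = x)
    (lamMax : ℝ) (hlamMaxPos : 0 < lamMax)
    (hRayleighMax : ∀ x : EuclideanSpace ℝ (Fin n), ⟪Q x, x⟫ ≤ lamMax * ‖x‖ ^ 2)
    (g : EuclideanSpace ℝ (Fin n)) (hg : g ≠ 0) (τ : ℝ)
    (hτpos : 0 < τ) (hτle : τ ≤ 1 / lamMax)
    (α : ℝ) (hα₁ : 1 < α) (hα₂ : α ≤ 2) :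
    (∀ β : ℝ, β ≠ 1 →
      doglegSurrogate τ g Qinv α ((1 : ℝ) • doglegPath τ g Qinv α)
        < doglegSurrogate τ g Qinv α (β • doglegPath τ g Qinv α)) ∧
    (∃ a b c : ℝ, 0 < a ∧ ∀ β : ℝ,
      quadModel Q g (β • doglegPath τ g Qinv α) = a * β ^ 2 + b * β + c) ∧
    (∀ β : ℝ, β ≠ -⟪g, doglegPath τ g Qinv α⟫ / ⟪Q (doglegPath τ g Qinv α), doglegPath τ g Qinv α⟫ →
      quadModel Q g ((-⟪g, doglegPath τ g Qinv α⟫ / ⟪Q (doglegPath τ g Qinv α), doglegPath τ g Qinv α⟫)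
          • doglegPath τ g Qinv α)
        < quadModel Q g (β • doglegPath τ g Qinv α)) ∧
    1 ≤ -⟪g, doglegPath τ g Qinv α⟫ / ⟪Q (doglegPath τ g Qinv α), doglegPath τ g Qinv α⟫ := by
  have hQpsd : ∀ x, 0 ≤ ⟪Q x, x⟫ := fun x => by
    rcases eq_or_ne x 0 with rfl | hx
    · simp
    · exact (hQpd x hx).le
  have hcauchy := inner_map_smul_self_le_inner (hRayleighMax g) hτpos.le
    (by rwa [le_div_iff₀ hlamMaxPos] at hτle)
  have hs₀ : 0 ≤ α - 1 := by linarith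
  have hdescent := inner_le_inner_add_smul_sub hQsymm hQpsd (hinv₁ g) hcauchy hs₀
  have hcurv := inner_map_add_smul_sub_le hQpsd (hinv₁ g) hcauchy hs₀ (by linarith)
  rw [← neg_neg (τ • g + _), ← doglegPath_of_one_lt hα₁, inner_neg_right] at hdescent
  rw [← neg_neg (τ • g + _), ← doglegPath_of_one_lt hα₁, map_neg, inner_neg_neg,
    inner_neg_right] at hcurv
  set p := doglegPath τ g Qinv α
  have hgc : 0 < ⟪g, τ • g⟫ := by
    rw [real_inner_smul_right, real_inner_self_eq_norm_sq]
    exact mul_pos hτpos (pow_pos (norm_pos_iff.mpr hg) 2)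
  have hgp : ⟪g, p⟫ < 0 := by linarith
  have hpQp : 0 < ⟪Q p, p⟫ := hQpd p (by rintro hp; simp [hp] at hgp)
  refine ⟨fun β hβ => ?_, ⟨_, _, 0, half_pos hpQp, fun β => by rw [quadModel_smul, add_zero]⟩,
    fun β hβ => ?_, (le_div_iff₀ hpQp).mpr (by linarith)⟩
  · rw [doglegSurrogate_smul_doglegPath hgp.ne, doglegSurrogate_smul_doglegPath hgp.ne]
    exact quadratic_lt_quadratic_of_ne_vertex (by linarith) (by ring) hβ
  · rw [quadModel_smul, quadModel_smul]
    exact quadratic_lt_quadratic_of_ne_vertex (half_pos hpQp) (by field_simp; ring) hβ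

/-- Fix `α ∈ (1,2]`, assume `g ≠ 0` and `τ ∈ (0, 1/λ_max]`. Then `β = 1` is the
unique minimizer of `m̄_α(β) = m_α(β p(α))` over `ℝ`, `q̄(β) = q(β p(α))` is a
strictly convex univariate quadratic, and its unique minimizer
`β_q = -⟨g, p(α)⟩ / (p(α)ᵀ Q p(α))` satisfies `β_q ≥ 1`. -/
theorem dogleg_restriction_minimizers {n : ℕ}
    (Q Qinv : EuclideanSpace ℝ (Fin n) →ₗ[ℝ] EuclideanSpace ℝ (Fin n))
    (hQsymm : ∀ x y : EuclideanSpace ℝ (Fin n), ⟪Q x, y⟫ = ⟪x, Q y⟫)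
    (hQpd : ∀ x : EuclideanSpace ℝ (Fin n), x ≠ 0 → 0 < ⟪Q x, x⟫)
    (hinv₁ : ∀ x, Q (Qinv x) = x) (hinv₂ : ∀ x, Qinv (Q x) = x)
    (lamMax lamMin : ℝ) (hlamMaxPos : 0 < lamMax) (hlamMinPos : 0 < lamMin)
    (hRayleighMax : ∀ x : EuclideanSpace ℝ (Fin n), ⟪Q x, x⟫ ≤ lamMax * ‖x‖ ^ 2)
    (hRayleighMin : ∀ x : EuclideanSpace ℝ (Fin n), lamMin * ‖x‖ ^ 2 ≤ ⟪Q x, x⟫)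
    (g : EuclideanSpace ℝ (Fin n)) (hg : g ≠ 0) (τ : ℝ)
    (hτpos : 0 < τ) (hτle : τ ≤ 1 / lamMax)
    (α : ℝ) (hα₁ : 1 < α) (hα₂ : α ≤ 2) :
    (∀ β : ℝ, β ≠ 1 →
      doglegSurrogate τ g Qinv α ((1 : ℝ) • doglegPath τ g Qinv α)
        < doglegSurrogate τ g Qinv α (β • doglegPath τ g Qinv α)) ∧
    (∃ a b c : ℝ, 0 < a ∧ ∀ β : ℝ,
      quadModel Q g (β • doglegPath τ g Qinv α) = a * β ^ 2 + b * β + c) ∧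
    (∀ β : ℝ, β ≠ -⟪g, doglegPath τ g Qinv α⟫ / ⟪Q (doglegPath τ g Qinv α), doglegPath τ g Qinv α⟫ →
      quadModel Q g ((-⟪g, doglegPath τ g Qinv α⟫ / ⟪Q (doglegPath τ g Qinv α), doglegPath τ g Qinv α⟫)
          • doglegPath τ g Qinv α)
        < quadModel Q g (β • doglegPath τ g Qinv α)) ∧
    1 ≤ -⟪g, doglegPath τ g Qinv α⟫ / ⟪Q (doglegPath τ g Qinv α), doglegPath τ g Qinv α⟫ :=
  dogleg_restriction_minimizers_general Q Qinv hQsymm hQpd hinv₁ lamMax hlamMaxPos hRayleighMax g hg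
    τ hτpos hτle α hα₁ hα₂
end

section
/- (Opportunistic majorization along the dogleg direction.) Fix α ∈ (1,2], assume g ≠ 0 and τ ∈ (0, 1/λ_max]. Then for every β ∈ ℝ, q(β p(α)) ≤ m_α(β p(α)); equivalently, q(x) ≤ m_α(x) for every x on the line {β p(α) : β ∈ ℝ} through the origin in the dogleg direction. -/
open scoped RealInnerProductSpace

private lemma cs_psd {n : ℕ} (B : EuclideanSpace ℝ (Fin n) →ₗ[ℝ] EuclideanSpace ℝ (Fin n))
    (hsymm : ∀ x y, ⟪B x, y⟫ = ⟪x, B y⟫)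
    (hpsd : ∀ x, 0 ≤ ⟪B x, x⟫) (u v : EuclideanSpace ℝ (Fin n)) :
    ⟪B u, v⟫ ^ 2 ≤ ⟪B u, u⟫ * ⟪B v, v⟫ := by
  have h : ∀ t : ℝ, 0 ≤ ⟪B v, v⟫ * (t * t) + (2 * ⟪B u, v⟫) * t + ⟪B u, u⟫ := by
    intro t
    have hp := hpsd (u + t • v)
    have h1 : ⟪B v, u⟫ = ⟪B u, v⟫ := by rw [hsymm, real_inner_comm]
    have hexp : ⟪B (u + t • v), u + t • v⟫
        = ⟪B v, v⟫ * (t * t) + (2 * ⟪B u, v⟫) * t + ⟪B u, u⟫ := by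
      simp only [map_add, map_smul, inner_add_left, inner_add_right,
        real_inner_smul_left, real_inner_smul_right, h1]
      ring
    rw [hexp] at hp; linarith
  have hd := discrim_le_zero h
  simp only [discrim] at hd
  nlinarith [hd]

private lemma key_bound {n : ℕ}
    (Q : EuclideanSpace ℝ (Fin n) →ₗ[ℝ] EuclideanSpace ℝ (Fin n))
    (hQsymm : ∀ x y : EuclideanSpace ℝ (Fin n), ⟪Q x, y⟫ = ⟪x, Q y⟫)
    (hpsd : ∀ x : EuclideanSpace ℝ (Fin n), 0 ≤ ⟪Q x, x⟫)
    (lamMax : ℝ) (hlamMaxPos : 0 < lamMax)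
    (hRayleighMax : ∀ x : EuclideanSpace ℝ (Fin n), ⟪Q x, x⟫ ≤ lamMax * ‖x‖ ^ 2)
    (u : EuclideanSpace ℝ (Fin n)) :
    ⟪Q u, Q u⟫ ≤ lamMax * ⟪Q u, u⟫ := by
  set B : EuclideanSpace ℝ (Fin n) →ₗ[ℝ] EuclideanSpace ℝ (Fin n) :=
    lamMax • LinearMap.id - Q with hB
  have hBapp : ∀ x, B x = lamMax • x - Q x := fun x => rfl
  have hBinner : ∀ x y : EuclideanSpace ℝ (Fin n),
      ⟪B x, y⟫ = lamMax * ⟪x, y⟫ - ⟪Q x, y⟫ := by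
    intro x y
    rw [hBapp, inner_sub_left, real_inner_smul_left]
  have hBsymm : ∀ x y, ⟪B x, y⟫ = ⟪x, B y⟫ := by
    intro x y
    rw [hBinner, hBapp, inner_sub_right, real_inner_smul_right, hQsymm]
  have hBpsd : ∀ x, 0 ≤ ⟪B x, x⟫ := by
    intro x
    rw [hBinner]
    have := hRayleighMax x
    rw [real_inner_self_eq_norm_sq]
    linarith
  have hcs := cs_psd B hBsymm hBpsd u (B u)
  have h3 : ⟪B (B u), B u⟫ ≤ lamMax * ⟪B u, B u⟫ := by
    have := hBinner (B u) (B u)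
    have := hpsd (B u)
    linarith [hBinner (B u) (B u), hpsd (B u)]
  have h1 : 0 ≤ ⟪B u, u⟫ := hBpsd u
  have h2 : (0:ℝ) ≤ ⟪B u, B u⟫ := real_inner_self_nonneg
  have hcs2 : ⟪B u, B u⟫ ^ 2 ≤ ⟪B u, u⟫ * (lamMax * ⟪B u, B u⟫) := by
    have huB : ⟪B u, B u⟫ = ⟪u, B (B u)⟫ := hBsymm u (B u) ▸ by
      rw [← hBsymm]
    calc ⟪B u, B u⟫ ^ 2 ≤ ⟪B u, u⟫ * ⟪B (B u), B u⟫ := hcs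
      _ ≤ ⟪B u, u⟫ * (lamMax * ⟪B u, B u⟫) := by
          exact mul_le_mul_of_nonneg_left h3 h1
  have hmain : ⟪B u, B u⟫ ≤ lamMax * ⟪B u, u⟫ := by
    nlinarith [hcs2, h1, h2, hlamMaxPos, mul_nonneg hlamMaxPos.le h1]
  have e1 : ⟪B u, B u⟫
      = lamMax ^ 2 * ⟪u, u⟫ - 2 * lamMax * ⟪Q u, u⟫ + ⟪Q u, Q u⟫ := by
    rw [hBinner, hBapp, inner_sub_right, inner_sub_right, real_inner_smul_right,
      real_inner_smul_right, real_inner_comm (Q u) u, hQsymm]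
    ring
  have e2 : ⟪B u, u⟫ = lamMax * ⟪u, u⟫ - ⟪Q u, u⟫ := hBinner u u
  nlinarith [hmain, e1, e2]


set_option maxHeartbeats 1000000 in
/-- (Opportunistic majorization along the dogleg direction.) Fix `α ∈ (1,2]`,
assume `g ≠ 0` and `τ ∈ (0, 1/λ_max]`. Then for every `β ∈ ℝ`,
`q(β p(α)) ≤ m_α(β p(α))`. -/
theorem dogleg_opportunistic_majorization {n : ℕ}
    (Q Qinv : EuclideanSpace ℝ (Fin n) →ₗ[ℝ] EuclideanSpace ℝ (Fin n))
    (hQsymm : ∀ x y : EuclideanSpace ℝ (Fin n), ⟪Q x, y⟫ = ⟪x, Q y⟫)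
    (hQpd : ∀ x : EuclideanSpace ℝ (Fin n), x ≠ 0 → 0 < ⟪Q x, x⟫)
    (hinv₁ : ∀ x, Q (Qinv x) = x) (hinv₂ : ∀ x, Qinv (Q x) = x)
    (lamMax lamMin : ℝ) (hlamMaxPos : 0 < lamMax) (hlamMinPos : 0 < lamMin)
    (hRayleighMax : ∀ x : EuclideanSpace ℝ (Fin n), ⟪Q x, x⟫ ≤ lamMax * ‖x‖ ^ 2)
    (hRayleighMin : ∀ x : EuclideanSpace ℝ (Fin n), lamMin * ‖x‖ ^ 2 ≤ ⟪Q x, x⟫)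
    (g : EuclideanSpace ℝ (Fin n)) (hg : g ≠ 0) (τ : ℝ)
    (hτpos : 0 < τ) (hτle : τ ≤ 1 / lamMax)
    (α : ℝ) (hα₁ : 1 < α) (hα₂ : α ≤ 2) :
    ∀ β : ℝ, quadModel Q g (β • doglegPath τ g Qinv α)
      ≤ doglegSurrogate τ g Qinv α (β • doglegPath τ g Qinv α) := by
  intro β
  set u : EuclideanSpace ℝ (Fin n) := Qinv g with hu
  have hQu : Q u = g := hinv₁ g
  have hu0 : u ≠ 0 := by
    intro h
    apply hg
    rw [← hQu, h, map_zero]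
  have hpsd : ∀ x : EuclideanSpace ℝ (Fin n), 0 ≤ ⟪Q x, x⟫ := by
    intro x
    rcases eq_or_ne x 0 with h | h
    · simp [h]
    · exact (hQpd x h).le
  set p : EuclideanSpace ℝ (Fin n) := doglegPath τ g Qinv α with hp
  have hpdef : p = (-(τ * (2 - α))) • g + (-(α - 1)) • u := by
    rw [hp, doglegPath, if_neg (by linarith)]
    rw [← hu]
    module
  set G : ℝ := ⟪g, g⟫ with hGdef
  set U : ℝ := ⟪g, u⟫ with hUdef
  set A : ℝ := ⟪Q g, g⟫ with hAdef
  have hG : 0 < G := by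
    rw [hGdef, real_inner_self_eq_norm_sq]
    exact pow_pos (norm_pos_iff.mpr hg) 2
  have hU : 0 < U := by
    have : U = ⟪Q u, u⟫ := by rw [hUdef, hQu]
    rw [this]
    exact hQpd u hu0
  have hGU : G ≤ lamMax * U := by
    have := key_bound Q hQsymm hpsd lamMax hlamMaxPos hRayleighMax u
    rw [hQu] at this
    exact this
  have hA : A ≤ lamMax * G := by
    have := hRayleighMax g
    rw [← real_inner_self_eq_norm_sq] at this
    exact this
  have htaulam : τ * lamMax ≤ 1 := by
    have := (le_div_iff₀ hlamMaxPos).mp hτle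
    linarith
  have hQgu : ⟪Q g, u⟫ = G := by rw [hQsymm, hQu]
  have hgp : ⟪g, p⟫ = -(τ * (2 - α)) * G - (α - 1) * U := by
    rw [hpdef]
    simp only [inner_add_right, real_inner_smul_right]
    ring
  have hQp : ⟪Q p, p⟫ = (τ * (2 - α)) ^ 2 * A
      + 2 * (τ * (2 - α)) * (α - 1) * G + (α - 1) ^ 2 * U := by
    rw [hpdef]
    simp only [map_add, map_smul, inner_add_left, inner_add_right,
      real_inner_smul_left, real_inner_smul_right, hQu, hQgu,
      ← hGdef, ← hUdef, ← hAdef]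
    ring
  -- key inequality
  have hc : 0 ≤ τ * (2 - α) := mul_nonneg hτpos.le (by linarith)
  have hτG : τ * G ≤ U := by
    have h1 : τ * G ≤ τ * (lamMax * U) := mul_le_mul_of_nonneg_left hGU hτpos.le
    nlinarith
  have hK : ⟪Q p, p⟫ + ⟪g, p⟫ ≤ 0 := by
    rw [hQp, hgp]
    have h1 : (τ * (2 - α)) ^ 2 * A ≤ (τ * (2 - α)) ^ 2 * (lamMax * G) :=
      mul_le_mul_of_nonneg_left hA (sq_nonneg _)
    nlinarith [mul_nonneg (mul_nonneg (by linarith : (0:ℝ) ≤ α - 1) (by linarith : (0:ℝ) ≤ 2 - α)) (sub_nonneg.mpr hτG),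
      mul_le_mul_of_nonneg_left htaulam (mul_nonneg hc hG.le),
      mul_nonneg hc hG.le, hG.le, hU.le,
      mul_le_mul_of_nonneg_left hτG (mul_nonneg (by linarith : (0:ℝ) ≤ α - 1) (by linarith : (0:ℝ) ≤ 2 - α))]
  have hgp_neg : ⟪g, p⟫ < 0 := by
    rw [hgp]
    nlinarith [mul_nonneg hc hG.le, mul_pos (by linarith : (0:ℝ) < α - 1) hU]
  have hp0 : p ≠ 0 := by
    intro h
    rw [h, inner_zero_right] at hgp_neg
    exact lt_irrefl 0 hgp_neg
  have hpn : (0:ℝ) < ‖p‖ ^ 2 := pow_pos (norm_pos_iff.mpr hp0) 2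
  -- unfold and reduce
  rw [quadModel, doglegSurrogate, doglegG, doglegTau, ← hp]
  have h1 : ⟪g, β • p⟫ = β * ⟪g, p⟫ := real_inner_smul_right ..
  have h2 : ⟪Q (β • p), β • p⟫ = β ^ 2 * ⟪Q p, p⟫ := by
    rw [map_smul, real_inner_smul_left, real_inner_smul_right]
    ring
  have h3 : ‖β • p‖ ^ 2 = β ^ 2 * ‖p‖ ^ 2 := by
    rw [norm_smul, mul_pow, Real.norm_eq_abs, sq_abs]
  have h4 : ⟪(⟪g, p⟫ / ‖p‖ ^ 2) • p, β • p⟫ = β * ⟪g, p⟫ := by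
    rw [real_inner_smul_left, real_inner_smul_right, real_inner_self_eq_norm_sq]
    field_simp
  rw [h1, h2, h3, h4]
  have h5 : 1 / (2 * (-‖p‖ ^ 2 / ⟪g, p⟫)) * (β ^ 2 * ‖p‖ ^ 2)
      = -(β ^ 2 * ⟪g, p⟫) / 2 := by
    field_simp
  rw [h5]
  nlinarith [mul_nonneg (sq_nonneg β) (neg_nonneg.mpr hK)]
end

section
/- (Monotone decrease of the PDOM iteration.) Suppose x_{k+1} minimizes the function x ↦ h(x) + m_{γ,α}(x) over ℝ^n (the scaled proximal update), and suppose the backtracking (opportunistic majorization) condition q(x_{k+1}) ≤ m_α(x_{k+1}) holds. Then f(x_{k+1}) ≤ f(x_k). -/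
open scoped RealInnerProductSpace

/-! A step that minimizes `h + m` for a model `m` touching `q` at `x_k` and majorizing it at
`x_{k+1}` cannot increase `q + h`. The scaled model `m_{γ,α}` touches `q` at `x_k`, and since
`γ τ_α ≤ τ_α` it lies above `m_α`, so the backtracking condition makes it a majorant at
`x_{k+1}`. -/

theorem EReal.add_le_add_of_majorized_minimizer {α : Type*} (q m : α → ℝ) (h : α → EReal)
    {x y : α} (hmx : m x = q x) (hqy : q y ≤ m y) (hmin : h y + m y ≤ h x + m x) :
    (q y : EReal) + h y ≤ q x + h x :=
  calc (q y : EReal) + h y ≤ h y + m y := by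
        rw [add_comm]; gcongr
    _ ≤ h x + m x := hmin
    _ = q x + h x := by rw [hmx, add_comm]

section ProxModel

variable {E : Type*} [NormedAddCommGroup E] [InnerProductSpace ℝ E]

noncomputable def proxModel (c : ℝ) (g x₀ : E) (τ : ℝ) (x : E) : ℝ :=
  c + ⟪g, x - x₀⟫ + 1 / (2 * τ) * ‖x - x₀‖ ^ 2

variable {c τ τ' : ℝ} {g x₀ x : E}

@[simp]
theorem proxModel_self : proxModel c g x₀ τ x₀ = c := by
  simp [proxModel]

theorem proxModel_le_of_le (hτ : 0 < τ) (hττ' : τ ≤ τ') :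
    proxModel c g x₀ τ' x ≤ proxModel c g x₀ τ x := by
  unfold proxModel
  gcongr

end ProxModel

theorem pdom_monotone_decrease_general {n : ℕ}
    (q : EuclideanSpace ℝ (Fin n) → ℝ)
    (h : EuclideanSpace ℝ (Fin n) → EReal)
    (xk xk1 gα : EuclideanSpace ℝ (Fin n))
    (τα : ℝ) (hτα : 0 < τα) (γ : ℝ) (hγ₀ : 0 < γ) (hγ₁ : γ < 1)
    (mα mγα : EuclideanSpace ℝ (Fin n) → ℝ)
    (hmα : ∀ x, mα x = q xk + ⟪gα, x - xk⟫ + (1 / (2 * τα)) * ‖x - xk‖ ^ 2)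
    (hmγα : ∀ x, mγα x = q xk + ⟪gα, x - xk⟫ + (1 / (2 * γ * τα)) * ‖x - xk‖ ^ 2)
    (hmin : ∀ x, h xk1 + (mγα xk1 : EReal) ≤ h x + (mγα x : EReal))
    (hback : q xk1 ≤ mα xk1) :
    (q xk1 : EReal) + h xk1 ≤ (q xk : EReal) + h xk := by
  have hmα' : mα = proxModel (q xk) gα xk τα := funext hmα
  have hmγα' : mγα = proxModel (q xk) gα xk (γ * τα) :=
    funext fun x => by rw [hmγα, proxModel, mul_assoc]
  have hmodel_le : mα xk1 ≤ mγα xk1 := by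
    rw [hmα', hmγα']
    exact proxModel_le_of_le (by positivity) (mul_le_of_le_one_left hτα.le hγ₁.le)
  refine EReal.add_le_add_of_majorized_minimizer q mγα h ?_ (hback.trans hmodel_le) (hmin xk)
  rw [hmγα', proxModel_self]

/-- (Monotone decrease of the PDOM iteration.) Suppose `x_{k+1}` minimizes
`x ↦ h(x) + m_{γ,α}(x)` over `ℝⁿ` (the scaled proximal update), and the
backtracking (opportunistic majorization) condition `q(x_{k+1}) ≤ m_α(x_{k+1})`
holds. Then `f(x_{k+1}) ≤ f(x_k)` where `f = q + h`. -/
theorem pdom_monotone_decrease {n : ℕ}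
    (Q : EuclideanSpace ℝ (Fin n) →ₗ[ℝ] EuclideanSpace ℝ (Fin n))
    (hQsymm : ∀ x y : EuclideanSpace ℝ (Fin n), ⟪Q x, y⟫ = ⟪x, Q y⟫)
    (hQpd : ∀ x : EuclideanSpace ℝ (Fin n), x ≠ 0 → 0 < ⟪Q x, x⟫)
    (b : EuclideanSpace ℝ (Fin n))
    (q : EuclideanSpace ℝ (Fin n) → ℝ)
    (hq : ∀ x, q x = (1 / 2) * ⟪Q x, x⟫ + ⟪b, x⟫)
    (h : EuclideanSpace ℝ (Fin n) → EReal)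
    (hproper : ∃ x, h x ≠ ⊤) (hnobot : ∀ x, h x ≠ ⊥)
    (xk xk1 gα : EuclideanSpace ℝ (Fin n))
    (τα : ℝ) (hτα : 0 < τα) (γ : ℝ) (hγ₀ : 0 < γ) (hγ₁ : γ < 1)
    (mα mγα : EuclideanSpace ℝ (Fin n) → ℝ)
    (hmα : ∀ x, mα x = q xk + ⟪gα, x - xk⟫ + (1 / (2 * τα)) * ‖x - xk‖ ^ 2)
    (hmγα : ∀ x, mγα x = q xk + ⟪gα, x - xk⟫ + (1 / (2 * γ * τα)) * ‖x - xk‖ ^ 2)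
    (hmin : ∀ x, h xk1 + (mγα xk1 : EReal) ≤ h x + (mγα x : EReal))
    (hback : q xk1 ≤ mα xk1) :
    (q xk1 : EReal) + h xk1 ≤ (q xk : EReal) + h xk :=
  pdom_monotone_decrease_general q h xk xk1 gα τα hτα γ hγ₀ hγ₁ mα mγα hmα hmγα hmin hback
end

section
/- (Sufficient decrease of the PDOM iteration.) Suppose x_{k+1} minimizes the function x ↦ h(x) + m_{γ,α}(x) over ℝ^n (the scaled proximal update), and suppose the backtracking (opportunistic majorization) condition q(x_{k+1}) ≤ m_α(x_{k+1}) holds. Then f(x_{k+1}) ≤ f(x_k) − (1/(2 γ τ_α) − 1/(2 τ_α)) ‖x_{k+1} − x_k‖², where the coefficient 1/(2 γ τ_α) − 1/(2 τ_α) is strictly positive since γ ∈ (0,1). -/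
open scoped RealInnerProductSpace

/-- (Sufficient decrease of the PDOM iteration.) Suppose `x_{k+1}` minimizes
`x ↦ h(x) + m_{γ,α}(x)` over `ℝⁿ` (the scaled proximal update), and the
backtracking condition `q(x_{k+1}) ≤ m_α(x_{k+1})` holds. Then
`f(x_{k+1}) ≤ f(x_k) − (1/(2γτ_α) − 1/(2τ_α)) ‖x_{k+1} − x_k‖²`, where the
coefficient `1/(2γτ_α) − 1/(2τ_α)` is strictly positive since `γ ∈ (0,1)`. -/
theorem pdom_sufficient_decrease {n : ℕ}
    (Q : EuclideanSpace ℝ (Fin n) →ₗ[ℝ] EuclideanSpace ℝ (Fin n))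
    (hQsymm : ∀ x y : EuclideanSpace ℝ (Fin n), ⟪Q x, y⟫ = ⟪x, Q y⟫)
    (hQpd : ∀ x : EuclideanSpace ℝ (Fin n), x ≠ 0 → 0 < ⟪Q x, x⟫)
    (b : EuclideanSpace ℝ (Fin n))
    (q : EuclideanSpace ℝ (Fin n) → ℝ)
    (hq : ∀ x, q x = (1 / 2) * ⟪Q x, x⟫ + ⟪b, x⟫)
    (h : EuclideanSpace ℝ (Fin n) → EReal)
    (hproper : ∃ x, h x ≠ ⊤) (hnobot : ∀ x, h x ≠ ⊥)
    (xk xk1 gα : EuclideanSpace ℝ (Fin n))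
    (τα : ℝ) (hτα : 0 < τα) (γ : ℝ) (hγ₀ : 0 < γ) (hγ₁ : γ < 1)
    (mα mγα : EuclideanSpace ℝ (Fin n) → ℝ)
    (hmα : ∀ x, mα x = q xk + ⟪gα, x - xk⟫ + (1 / (2 * τα)) * ‖x - xk‖ ^ 2)
    (hmγα : ∀ x, mγα x = q xk + ⟪gα, x - xk⟫ + (1 / (2 * γ * τα)) * ‖x - xk‖ ^ 2)
    (hmin : ∀ x, h xk1 + (mγα xk1 : EReal) ≤ h x + (mγα x : EReal))
    (hback : q xk1 ≤ mα xk1) :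
    0 < 1 / (2 * γ * τα) - 1 / (2 * τα) ∧
    (q xk1 : EReal) + h xk1 ≤ (q xk : EReal) + h xk
      - (((1 / (2 * γ * τα) - 1 / (2 * τα)) * ‖xk1 - xk‖ ^ 2 : ℝ) : EReal) := by
  have hc : 0 < 1 / (2 * γ * τα) - 1 / (2 * τα) := by
    have h1 : 0 < 2 * γ * τα := by positivity
    have h2 : 2 * γ * τα < 2 * τα := by nlinarith
    have := one_div_lt_one_div_of_lt h1 h2
    linarith
  refine ⟨hc, ?_⟩
  -- mγα xk = q xk
  have hmk : mγα xk = q xk := by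
    simp [hmγα xk]
  -- h xk1 is not ⊤
  obtain ⟨x0, hx0⟩ := hproper
  have htop1 : h xk1 ≠ ⊤ := by
    intro htop
    have := hmin x0
    rw [htop] at this
    have hlhs : (⊤ : EReal) + (mγα xk1 : EReal) = ⊤ := by
      simp [EReal.top_add_of_ne_bot]
    rw [hlhs] at this
    have : h x0 + (mγα x0 : EReal) = ⊤ := top_le_iff.mp this
    exact hx0 (by
      cases h' : h x0 with
      | bot => exact absurd h' (hnobot x0)
      | top => rfl
      | coe r => rw [h'] at this; exact absurd this (by exact_mod_cast EReal.coe_ne_top _))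
  set r1 := (h xk1).toReal with hr1
  have hhxk1 : h xk1 = (r1 : EReal) := (EReal.coe_toReal htop1 (hnobot xk1)).symm
  -- real inequality: q xk1 + c‖‖² ≤ mγα xk1
  have hkey2 : q xk1 + (1 / (2 * γ * τα) - 1 / (2 * τα)) * ‖xk1 - xk‖ ^ 2 ≤ mγα xk1 := by
    rw [hmγα xk1]
    rw [hmα xk1] at hback
    nlinarith [hback]
  by_cases htopk : h xk = ⊤
  · rw [htopk]
    have : (q xk : EReal) + ⊤ - (((1 / (2 * γ * τα) - 1 / (2 * τα)) * ‖xk1 - xk‖ ^ 2 : ℝ) : EReal) = ⊤ := by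
      rw [EReal.add_top_of_ne_bot (by exact_mod_cast EReal.coe_ne_bot _)]
      exact EReal.top_sub_coe _
    rw [this, hhxk1]
    exact le_top
  · set r0 := (h xk).toReal with hr0
    have hhxk : h xk = (r0 : EReal) := (EReal.coe_toReal htopk (hnobot xk)).symm
    have hkey1 : r1 + mγα xk1 ≤ r0 + q xk := by
      have := hmin xk
      rw [hmk, hhxk1, hhxk] at this
      exact_mod_cast this
    rw [hhxk1, hhxk]
    have : q xk1 + r1 ≤ q xk + r0 - (1 / (2 * γ * τα) - 1 / (2 * τα)) * ‖xk1 - xk‖ ^ 2 := by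
      linarith
    exact_mod_cast this
end

section
/- (Uniform boundedness of the dogleg step sizes.) If g ≠ 0 and τ ∈ (0, 1/λ_max], then for every α ∈ (0,2] the dogleg step size satisfies τ ≤ τ_α ≤ τ + 1/λ_min. In particular the step sizes τ_α are uniformly bounded by a constant depending only on Q and τ. -/
open scoped RealInnerProductSpace

/-!
Write `u = Q⁻¹ g` and `v = -p(α)`. Then `τ_α = ‖v‖² / ⟪g, v⟫` and `v` lies on the segment from
the Cauchy point `τ g` to the Newton point `u`. Since `τ λ_max ≤ 1`, the Rayleigh bounds (and
Cauchy–Schwarz for `⟪Q ·, ·⟫`) give `τ ‖g‖² ≤ ⟪g, u⟫` and `τ ⟪g, u⟫ ≤ ‖u‖²`, i.e.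
`⟪u - τ g, x⟫ ≥ 0` at both endpoints `x` of the segment; hence `‖v‖² - τ ⟪g, v⟫ = ⟪v - τ g, v⟫ ≥ 0`.
Dually, `λ_min ‖u‖² ≤ ⟪g, u⟫ ≤ ‖g‖² / λ_min` says `⟪u, x⟫ ≤ ⟪g, x⟫ / λ_min` at both endpoints,
hence at `v`, and splitting `‖v‖² = ⟪v, v⟫` along the convex combination gives
`‖v‖² ≤ (τ + 1 / λ_min) ⟪g, v⟫`.
-/

section InnerProductSpace

variable {E : Type*} [NormedAddCommGroup E] [InnerProductSpace ℝ E]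

theorem norm_sq_le_mul_inner_of_map_eq {Q : E →ₗ[ℝ] E} (hQ : Q.IsSymmetric)
    (hQ₀ : ∀ x, 0 ≤ ⟪Q x, x⟫) {Λ : ℝ} (hΛ : ∀ x, ⟪Q x, x⟫ ≤ Λ * ‖x‖ ^ 2) {g u : E}
    (hu : Q u = g) : ‖g‖ ^ 2 ≤ Λ * ⟪g, u⟫ := by
  rcases eq_or_ne g 0 with rfl | hg
  · simp
  -- Cauchy–Schwarz for the semi-inner product `⟪Q ·, ·⟫`
  have hcs : ⟪Q u, g⟫ * ⟪Q g, u⟫ ≤ ⟪Q u, u⟫ * ⟪Q g, g⟫ :=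
    LinearMap.BilinForm.apply_mul_apply_le_of_forall_zero_le ((innerₗ E).comp Q) hQ₀ u g
  rw [hQ g u, hu, real_inner_self_eq_norm_sq] at hcs
  have hS : 0 ≤ ⟪g, u⟫ := hu ▸ hQ₀ u
  have hG : 0 < ‖g‖ ^ 2 := by positivity
  nlinarith [mul_le_mul_of_nonneg_left (hΛ g) hS]

theorem mul_inner_le_norm_sq_of_mul_norm_sq_le_inner {c : ℝ} (hc : 0 ≤ c) {g u : E}
    (h : c * ‖u‖ ^ 2 ≤ ⟪g, u⟫) : c * ⟪g, u⟫ ≤ ‖g‖ ^ 2 := by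
  have hcs := real_inner_mul_inner_self_le g u
  rw [real_inner_self_eq_norm_sq, real_inner_self_eq_norm_sq] at hcs
  rcases le_or_gt ⟪g, u⟫ 0 with hS | hS
  · exact (mul_nonpos_of_nonneg_of_nonpos hc hS).trans (sq_nonneg _)
  · nlinarith [mul_le_mul_of_nonneg_left h (sq_nonneg ‖g‖)]

variable {g b v : E} {τ : ℝ}

theorem mul_inner_le_norm_sq_of_mem_segment (hτ : 0 ≤ τ) (hg : τ * ‖g‖ ^ 2 ≤ ⟪g, b⟫)
    (hb : τ * ⟪g, b⟫ ≤ ‖b‖ ^ 2) (hv : v ∈ segment ℝ (τ • g) b) :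
    τ * ⟪g, v⟫ ≤ ‖v‖ ^ 2 := by
  obtain ⟨s, t, hs, ht, hst, rfl⟩ := hv
  have hgap : ‖s • τ • g + t • b‖ ^ 2 - τ * ⟪g, s • τ • g + t • b⟫
      = t * (s * τ * (⟪g, b⟫ - τ * ‖g‖ ^ 2) + t * (‖b‖ ^ 2 - τ * ⟪g, b⟫)) := by
    obtain rfl : s = 1 - t := by linarith
    rw [← real_inner_self_eq_norm_sq ((1 - t) • τ • g + t • b)]
    simp only [inner_add_left, inner_add_right, real_inner_smul_left, real_inner_smul_right,
      real_inner_comm g b]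
    rw [real_inner_self_eq_norm_sq g, real_inner_self_eq_norm_sq b]
    ring
  have := mul_nonneg ht (add_nonneg (mul_nonneg (mul_nonneg hs hτ) (sub_nonneg.2 hg))
    (mul_nonneg ht (sub_nonneg.2 hb)))
  linarith

theorem norm_sq_le_mul_inner_of_mem_segment (hτ : 0 ≤ τ) {c : ℝ} (hc : 0 ≤ c)
    (hg : ⟪g, b⟫ ≤ c * ‖g‖ ^ 2) (hb : ‖b‖ ^ 2 ≤ c * ⟪g, b⟫)
    (hv : v ∈ segment ℝ (τ • g) b) (hgv : 0 ≤ ⟪g, v⟫) :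
    ‖v‖ ^ 2 ≤ (τ + c) * ⟪g, v⟫ := by
  obtain ⟨s, t, hs, ht, hst, rfl⟩ := hv
  set v := s • τ • g + t • b
  have hbv : ⟪b, v⟫ ≤ c * ⟪g, v⟫ := by
    simp only [v, inner_add_right, real_inner_smul_right, real_inner_self_eq_norm_sq,
      real_inner_comm g b]
    nlinarith [mul_le_mul_of_nonneg_left hg (mul_nonneg hs hτ), mul_le_mul_of_nonneg_left hb ht]
  calc ‖v‖ ^ 2 = s * τ * ⟪g, v⟫ + t * ⟪b, v⟫ := by
        rw [← real_inner_self_eq_norm_sq]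
        simp only [v, inner_add_left, real_inner_smul_left]
        ring
    _ ≤ s * τ * ⟪g, v⟫ + t * (c * ⟪g, v⟫) := by gcongr
    _ ≤ (τ + c) * ⟪g, v⟫ := by nlinarith [mul_nonneg hτ hgv, mul_nonneg hc hgv]

end InnerProductSpace

theorem neg_doglegPath_mem_segment {n : ℕ} (τ : ℝ) (g : EuclideanSpace ℝ (Fin n))
    (Qinv : EuclideanSpace ℝ (Fin n) →ₗ[ℝ] EuclideanSpace ℝ (Fin n)) {α : ℝ} (hα : α ≤ 2) :
    -doglegPath τ g Qinv α ∈ segment ℝ (τ • g) (Qinv g) := by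
  unfold doglegPath
  split_ifs with h
  · simpa using left_mem_segment ℝ (τ • g) (Qinv g)
  · exact ⟨2 - α, α - 1, by linarith, by linarith, by ring, by module⟩

theorem doglegTau_eq_div {n : ℕ} (τ : ℝ) (g : EuclideanSpace ℝ (Fin n))
    (Qinv : EuclideanSpace ℝ (Fin n) →ₗ[ℝ] EuclideanSpace ℝ (Fin n)) (α : ℝ) :
    doglegTau τ g Qinv α = ‖-doglegPath τ g Qinv α‖ ^ 2 / ⟪g, -doglegPath τ g Qinv α⟫ := by
  rw [doglegTau, norm_neg, inner_neg_right, div_neg, neg_div]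

theorem doglegTau_bounded_general {n : ℕ}
    (Q Qinv : EuclideanSpace ℝ (Fin n) →ₗ[ℝ] EuclideanSpace ℝ (Fin n))
    (hQsymm : ∀ x y : EuclideanSpace ℝ (Fin n), ⟪Q x, y⟫ = ⟪x, Q y⟫)
    (hinv₁ : ∀ x, Q (Qinv x) = x)
    (lamMax lamMin : ℝ) (hlamMinPos : 0 < lamMin)
    (hRayleighMax : ∀ x : EuclideanSpace ℝ (Fin n), ⟪Q x, x⟫ ≤ lamMax * ‖x‖ ^ 2)
    (hRayleighMin : ∀ x : EuclideanSpace ℝ (Fin n), lamMin * ‖x‖ ^ 2 ≤ ⟪Q x, x⟫)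
    (g : EuclideanSpace ℝ (Fin n)) (hg : g ≠ 0) (τ : ℝ)
    (hτpos : 0 < τ) (hτle : τ ≤ 1 / lamMax)
    (α : ℝ) (hα₂ : α ≤ 2) :
    τ ≤ doglegTau τ g Qinv α ∧ doglegTau τ g Qinv α ≤ τ + 1 / lamMin := by
  set u := Qinv g
  have hu : Q u = g := hinv₁ g
  have hu₀ : u ≠ 0 := fun h => hg (by rw [← hu, h, map_zero])
  have hQ₀ x : 0 ≤ ⟪Q x, x⟫ := (by positivity : 0 ≤ lamMin * ‖x‖ ^ 2).trans (hRayleighMin x)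
  have hu_min : lamMin * ‖u‖ ^ 2 ≤ ⟪g, u⟫ := hu ▸ hRayleighMin u
  have hu_max : ⟪g, u⟫ ≤ lamMax * ‖u‖ ^ 2 := hu ▸ hRayleighMax u
  have hg_max : ‖g‖ ^ 2 ≤ lamMax * ⟪g, u⟫ :=
    norm_sq_le_mul_inner_of_map_eq hQsymm hQ₀ hRayleighMax hu
  have hg_min : lamMin * ⟪g, u⟫ ≤ ‖g‖ ^ 2 :=
    mul_inner_le_norm_sq_of_mul_norm_sq_le_inner hlamMinPos.le hu_min
  have hτΛ : τ * lamMax ≤ 1 := by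
    rwa [le_div_iff₀ (one_div_pos.mp (hτpos.trans_le hτle))] at hτle
  have hτG : τ * ‖g‖ ^ 2 ≤ ⟪g, u⟫ := by
    nlinarith [mul_le_mul_of_nonneg_left hg_max hτpos.le, hu_min.trans' (by positivity)]
  have hτS : τ * ⟪g, u⟫ ≤ ‖u‖ ^ 2 := by
    nlinarith [mul_le_mul_of_nonneg_left hu_max hτpos.le, sq_nonneg ‖u‖]
  have hv := neg_doglegPath_mem_segment τ g Qinv hα₂
  have hgv : 0 < ⟪g, -doglegPath τ g Qinv α⟫ :=
    (convex_halfSpace_gt (innerₗ _ g).isLinear 0).segment_subset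
      (show 0 < ⟪g, τ • g⟫ by rw [real_inner_smul_right, real_inner_self_eq_norm_sq]; positivity)
      (hu_min.trans_lt' (by positivity)) hv
  rw [doglegTau_eq_div, le_div_iff₀ hgv, div_le_iff₀ hgv]
  exact ⟨mul_inner_le_norm_sq_of_mem_segment hτpos.le hτG hτS hv,
    norm_sq_le_mul_inner_of_mem_segment hτpos.le (by positivity)
      (by rwa [one_div_mul_eq_div, le_div_iff₀' hlamMinPos])
      (by rwa [one_div_mul_eq_div, le_div_iff₀' hlamMinPos]) hv hgv.le⟩

/-- (Uniform boundedness of the dogleg step sizes.) If `g ≠ 0` and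
`τ ∈ (0, 1/λ_max]`, then for every `α ∈ (0,2]` the dogleg step size satisfies
`τ ≤ τ_α ≤ τ + 1/λ_min`. -/
theorem doglegTau_bounded {n : ℕ}
    (Q Qinv : EuclideanSpace ℝ (Fin n) →ₗ[ℝ] EuclideanSpace ℝ (Fin n))
    (hQsymm : ∀ x y : EuclideanSpace ℝ (Fin n), ⟪Q x, y⟫ = ⟪x, Q y⟫)
    (hQpd : ∀ x : EuclideanSpace ℝ (Fin n), x ≠ 0 → 0 < ⟪Q x, x⟫)
    (hinv₁ : ∀ x, Q (Qinv x) = x) (hinv₂ : ∀ x, Qinv (Q x) = x)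
    (lamMax lamMin : ℝ) (hlamMaxPos : 0 < lamMax) (hlamMinPos : 0 < lamMin)
    (hRayleighMax : ∀ x : EuclideanSpace ℝ (Fin n), ⟪Q x, x⟫ ≤ lamMax * ‖x‖ ^ 2)
    (hRayleighMin : ∀ x : EuclideanSpace ℝ (Fin n), lamMin * ‖x‖ ^ 2 ≤ ⟪Q x, x⟫)
    (g : EuclideanSpace ℝ (Fin n)) (hg : g ≠ 0) (τ : ℝ)
    (hτpos : 0 < τ) (hτle : τ ≤ 1 / lamMax)
    (α : ℝ) (hα₀ : 0 < α) (hα₂ : α ≤ 2) :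
    τ ≤ doglegTau τ g Qinv α ∧ doglegTau τ g Qinv α ≤ τ + 1 / lamMin :=
  doglegTau_bounded_general Q Qinv hQsymm hinv₁ lamMax lamMin hlamMinPos hRayleighMax hRayleighMin g
    hg τ hτpos hτle α hα₂
end
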